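/- The derivations ∂₁ = 2z·∂/∂y - x²·∂/∂z and ∂₂ = 3t²·∂/∂y - x²·∂/∂t define locally nilpotent derivations on the coordinate ring ℂ[X] = ℂ[x,y,z,t]/(x²y+z²+x+t³), i.e. each annihilates P = x²y+z²+x+t³ and is locally nilpotent, and Ker(∂₁) ∩ Ker(∂₂) ⊇ ℂ[x]. -/

import Mathlib

/-! Both derivations are triangular: each sends a variable into the subalgebra generated by
variables on which it is already known to be locally nilpotent (x, t, z, y in this order for ∂₁;
x, z, t, y for ∂₂). By the Leibniz rule the elements killed by some power of a derivation form a
subalgebra, so the derivation is locally nilpotent on all of ℂ[x,y,z,t]. Both kill x, hence all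
of ℂ[x]. -/

open MvPolynomial

/-- ∂₁ = 2z ∂/∂y - x² ∂/∂z on ℂ[x,y,z,t]. -/
noncomputable def d1 : Derivation ℂ (MvPolynomial (Fin 4) ℂ) (MvPolynomial (Fin 4) ℂ) :=
  mkDerivation ℂ ![0, 2 * X 2, -(X 0 ^ 2), 0]

/-- ∂₂ = 3t² ∂/∂y - x² ∂/∂t on ℂ[x,y,z,t]. -/
noncomputable def d2 : Derivation ℂ (MvPolynomial (Fin 4) ℂ) (MvPolynomial (Fin 4) ℂ) :=
  mkDerivation ℂ ![0, 3 * X 3 ^ 2, 0, -(X 0 ^ 2)]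

/-- P = x²y + z² + x + t³ -/
noncomputable def KRP : MvPolynomial (Fin 4) ℂ :=
  X 0 ^ 2 * X 1 + X 2 ^ 2 + X 0 + X 3 ^ 3

namespace Derivation

open Finset

variable {R A : Type*} [CommSemiring R] [CommSemiring A] [Algebra R A] (D : Derivation R A A)

theorem iterate_leibniz (n : ℕ) (a b : A) :
    D^[n] (a * b) = ∑ ij ∈ antidiagonal n, n.choose ij.1 • (D^[ij.1] a * D^[ij.2] b) := by
  induction n with
  | zero => simp
  | succ n ih =>
    rw [sum_antidiagonal_choose_succ_nsmul (fun i j => D^[i] a * D^[j] b) n]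
    simp only [Function.iterate_succ_apply', ih, map_sum, map_nsmul, leibniz, smul_eq_mul,
      smul_add, sum_add_distrib]
    refine congrArg _ (sum_congr rfl fun ⟨i, j⟩ hij => ?_)
    rw [n.choose_symm_of_eq_add (mem_antidiagonal.1 hij).symm, mul_comm]

theorem iterate_eq_zero_of_le {m n : ℕ} (h : m ≤ n) {a : A} (ha : D^[m] a = 0) :
    D^[n] a = 0 := by
  rw [← Nat.sub_add_cancel h, Function.iterate_add_apply, ha, iterate_map_zero]

theorem iterate_mul_eq_zero {m n : ℕ} {a b : A} (ha : D^[m] a = 0) (hb : D^[n] b = 0) :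
    D^[m + n] (a * b) = 0 := by
  rw [iterate_leibniz]
  refine sum_eq_zero fun ⟨i, j⟩ hij => ?_
  obtain hi | hj : m ≤ i ∨ n ≤ j := by
    have := mem_antidiagonal.1 hij
    omega
  · rw [D.iterate_eq_zero_of_le hi ha, zero_mul, smul_zero]
  · rw [D.iterate_eq_zero_of_le hj hb, mul_zero, smul_zero]

def nilSubalgebra : Subalgebra R A where
  carrier := {a | ∃ n, D^[n] a = 0}
  mul_mem' := fun ⟨m, hm⟩ ⟨n, hn⟩ => ⟨m + n, D.iterate_mul_eq_zero hm hn⟩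
  add_mem' := fun ⟨m, hm⟩ ⟨n, hn⟩ => ⟨max m n, by
    rw [iterate_map_add, D.iterate_eq_zero_of_le (le_max_left m n) hm,
      D.iterate_eq_zero_of_le (le_max_right m n) hn, add_zero]⟩
  algebraMap_mem' r := ⟨1, D.map_algebraMap r⟩

theorem mem_nilSubalgebra_of_apply_mem {a : A} (h : D a ∈ D.nilSubalgebra) :
    a ∈ D.nilSubalgebra :=
  let ⟨n, hn⟩ := h
  ⟨n + 1, hn⟩

theorem nilSubalgebra_eq_top_of_adjoin_eq_top {s : Set A} (hs : Algebra.adjoin R s = ⊤)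
    (h : s ⊆ D.nilSubalgebra) : D.nilSubalgebra = ⊤ :=
  top_le_iff.1 (hs ▸ Algebra.adjoin_le h)

end Derivation

namespace MvPolynomial

variable {R σ : Type*} [CommSemiring R]

theorem nilSubalgebra_eq_top_of_X_mem (D : Derivation R (MvPolynomial σ R) (MvPolynomial σ R))
    (h : ∀ i, X i ∈ D.nilSubalgebra) : D.nilSubalgebra = ⊤ :=
  D.nilSubalgebra_eq_top_of_adjoin_eq_top adjoin_range_X (Set.range_subset_iff.2 h)

end MvPolynomial

theorem d1_X (i : Fin 4) : d1 (X i) = ![0, 2 * X 2, -(X 0 ^ 2), 0] i := mkDerivation_X _ _ _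

theorem d2_X (i : Fin 4) : d2 (X i) = ![0, 3 * X 3 ^ 2, 0, -(X 0 ^ 2)] i := mkDerivation_X _ _ _

theorem d1_KRP : d1 KRP = 0 := by
  simp only [KRP, map_add, Derivation.leibniz, Derivation.leibniz_pow, d1_X, Matrix.cons_val,
    smul_eq_mul, nsmul_eq_mul]
  ring

theorem d2_KRP : d2 KRP = 0 := by
  simp only [KRP, map_add, Derivation.leibniz, Derivation.leibniz_pow, d2_X, Matrix.cons_val,
    smul_eq_mul, nsmul_eq_mul]
  ring

theorem d1_nilSubalgebra_eq_top : d1.nilSubalgebra = ⊤ := by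
  refine nilSubalgebra_eq_top_of_X_mem d1 fun i => d1.mem_nilSubalgebra_of_apply_mem ?_
  have hx : X 0 ∈ d1.nilSubalgebra := d1.mem_nilSubalgebra_of_apply_mem (by simp [d1_X])
  have hz : X 2 ∈ d1.nilSubalgebra :=
    d1.mem_nilSubalgebra_of_apply_mem (by simpa [d1_X] using pow_mem hx 2)
  fin_cases i <;> rw [d1_X]
  · exact zero_mem _
  · exact mul_mem (ofNat_mem _ 2) hz
  · exact neg_mem (pow_mem hx 2)
  · exact zero_mem _

theorem d2_nilSubalgebra_eq_top : d2.nilSubalgebra = ⊤ := by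
  refine nilSubalgebra_eq_top_of_X_mem d2 fun i => d2.mem_nilSubalgebra_of_apply_mem ?_
  have hx : X 0 ∈ d2.nilSubalgebra := d2.mem_nilSubalgebra_of_apply_mem (by simp [d2_X])
  have ht : X 3 ∈ d2.nilSubalgebra :=
    d2.mem_nilSubalgebra_of_apply_mem (by simpa [d2_X] using pow_mem hx 2)
  fin_cases i <;> rw [d2_X]
  · exact zero_mem _
  · exact mul_mem (ofNat_mem _ 3) (pow_mem ht 2)
  · exact zero_mem _
  · exact neg_mem (pow_mem hx 2)

theorem stmt12 :
    d1 KRP = 0 ∧ d2 KRP = 0 ∧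
      (∀ f : MvPolynomial (Fin 4) ℂ, ∃ n : ℕ, (fun g => d1 g)^[n] f = 0) ∧
      (∀ f : MvPolynomial (Fin 4) ℂ, ∃ n : ℕ, (fun g => d2 g)^[n] f = 0) ∧
      (∀ p : Polynomial ℂ,
        d1 (Polynomial.aeval (X 0 : MvPolynomial (Fin 4) ℂ) p) = 0 ∧
        d2 (Polynomial.aeval (X 0 : MvPolynomial (Fin 4) ℂ) p) = 0) := by
  have hx₁ : d1 (X 0) = 0 := d1_X 0
  have hx₂ : d2 (X 0) = 0 := d2_X 0
  refine ⟨d1_KRP, d2_KRP, fun f => ?_, fun f => ?_, fun p => ⟨?_, ?_⟩⟩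
  · exact (d1_nilSubalgebra_eq_top ▸ Algebra.mem_top : f ∈ d1.nilSubalgebra)
  · exact (d2_nilSubalgebra_eq_top ▸ Algebra.mem_top : f ∈ d2.nilSubalgebra)
  · rw [Derivation.map_aeval, hx₁, smul_zero]
  · rw [Derivation.map_aeval, hx₂, smul_zero]
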